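/- Let Δ be the unit equilateral triangle in ℝ² with vertices (0,0), (1,0), (1/2, √3/2), and let D be the closed disk of radius √3/4 centered at the origin. Then D can hide behind Δ (every orthogonal projection of Δ onto a line is a segment of length at least √3/2), yet the area of D, namely 3π/16, is strictly greater than the area of Δ, namely √3/4. -/

import Mathlib

open scoped Pointwise
open MeasureTheory

/-- Orthogonal projection of a point onto the hyperplane `u^⊥`. -/
noncomputable def proj {n : ℕ} (u x : EuclideanSpace ℝ (Fin n)) : EuclideanSpace ℝ (Fin n) :=
  (Submodule.orthogonalProjectionOnto (ℝ ∙ u)ᗮ x : EuclideanSpace ℝ (Fin n))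

/-- `A` can hide behind `B`: for every unit direction `u` there is a translation vector in
`u^⊥` moving the shadow of `A` inside the shadow of `B`. -/
def HidesBehind {n : ℕ} (A B : Set (EuclideanSpace ℝ (Fin n))) : Prop :=
  ∀ u : EuclideanSpace ℝ (Fin n), ‖u‖ = 1 →
    ∃ v ∈ (ℝ ∙ u)ᗮ, v +ᵥ (proj u '' A) ⊆ proj u '' B

/-- The unit equilateral triangle in `ℝ²`. -/
noncomputable def Δ : Set (EuclideanSpace ℝ (Fin 2)) :=
  convexHull ℝ {!₂[0, 0], !₂[1, 0], !₂[1/2, Real.sqrt 3 / 2]}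

/-!
In the plane, the shadow of a set on the line `u^⊥` is read off from the values of the linear
functional `⟪w, ·⟫`, where `w` is `u` turned by a right angle. For a compact convex set these values
fill an interval, and for the disk of radius `r` they fill `[-r, r]`; so the disk hides behind `Δ`
as soon as every width of `Δ` is at least `2r = √3/2`. The width of `Δ` in the direction `w`
dominates `|⟪w, e⟫|` for each of its three edge vectors `e`; these sum to zero and the squares of
their inner products with `w` add up to `3/2`, which forces one of those squares to be at least
`3/4`.
The area of `Δ` is found by slicing it horizontally: at height `y` the slice has length
`1 - 2y/√3`.
-/

open Set
open scoped RealInnerProductSpace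

theorem IsCompact.exists_image_eq_Icc {E : Type*} [AddCommGroup E] [Module ℝ E]
    [TopologicalSpace E] {K : Set E} (hK : IsCompact K) (hKc : Convex ℝ K) (hne : K.Nonempty)
    (f : E →L[ℝ] ℝ) : ∃ m M, f '' K = Icc m M :=
  ⟨_, _, eq_Icc_of_connected_compact
    ⟨hne.image f, (hKc.linear_image f.toLinearMap).isPreconnected⟩ (hK.image f.continuous)⟩

theorem image_innerSL_closedBall_zero {E : Type*} [NormedAddCommGroup E] [InnerProductSpace ℝ E]
    {w : E} (hw : ‖w‖ = 1) (r : ℝ) : innerSL ℝ w '' Metric.closedBall 0 r = Icc (-r) r := by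
  ext t
  constructor
  · rintro ⟨x, hx, rfl⟩
    rw [mem_closedBall_zero_iff] at hx
    have h := abs_real_inner_le_norm w x
    rw [hw, one_mul] at h
    exact abs_le.1 (h.trans hx)
  · intro ht
    refine ⟨t • w, ?_, ?_⟩
    · rw [mem_closedBall_zero_iff, norm_smul, hw, mul_one]
      exact abs_le.2 ht
    · simp [hw]

theorem sq_add_sq_add_sq_le_two_mul_sq {x y z d : ℝ} (h : x + y + z = 0) (hx : |x| ≤ d)
    (hy : |y| ≤ d) (hz : |z| ≤ d) : x ^ 2 + y ^ 2 + z ^ 2 ≤ 2 * d ^ 2 := by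
  obtain rfl : z = -(x + y) := by linarith
  have hx2 := sq_le_sq' (abs_le.1 hx).1 (abs_le.1 hx).2
  have hy2 := sq_le_sq' (abs_le.1 hy).1 (abs_le.1 hy).2
  have hz2 := sq_le_sq' (abs_le.1 hz).1 (abs_le.1 hz).2
  -- two of the three numbers have the same sign, and the square of the third one dominates
  rcases le_total 0 (x * y) with hxy | hxy
  · nlinarith
  rcases le_total 0 (x * (x + y)) with hxz | hxz
  · nlinarith
  · nlinarith

local notation "ℝ²" => EuclideanSpace ℝ (Fin 2)

theorem EuclideanSpace.inner_fin_two (x y : ℝ²) : ⟪x, y⟫ = x 0 * y 0 + x 1 * y 1 := by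
  simp [PiLp.inner_apply, Fin.sum_univ_two, mul_comm]

theorem EuclideanSpace.norm_sq_fin_two (x : ℝ²) : ‖x‖ ^ 2 = x 0 ^ 2 + x 1 ^ 2 := by
  rw [← real_inner_self_eq_norm_sq, inner_fin_two]
  ring

noncomputable def rot90 (u : ℝ²) : ℝ² := !₂[-u 1, u 0]

@[simp]
theorem rot90_apply_zero (u : ℝ²) : rot90 u 0 = -u 1 := rfl

@[simp]
theorem rot90_apply_one (u : ℝ²) : rot90 u 1 = u 0 := rfl

theorem norm_rot90 (u : ℝ²) : ‖rot90 u‖ = ‖u‖ := by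
  have h : ‖rot90 u‖ ^ 2 = ‖u‖ ^ 2 := by
    simp only [EuclideanSpace.norm_sq_fin_two, rot90_apply_zero, rot90_apply_one]
    ring
  exact (pow_left_inj₀ (norm_nonneg _) (norm_nonneg _) two_ne_zero).1 h

theorem rot90_mem_orthogonal_span_singleton (u : ℝ²) : rot90 u ∈ (ℝ ∙ u)ᗮ := by
  rw [Submodule.mem_orthogonal_singleton_iff_inner_right, EuclideanSpace.inner_fin_two,
    rot90_apply_zero, rot90_apply_one]
  ring

theorem proj_eq_inner_rot90_smul {u : ℝ²} (hu : ‖u‖ = 1) (x : ℝ²) :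
    proj u x = ⟪rot90 u, x⟫ • rot90 u := by
  have hu2 := EuclideanSpace.norm_sq_fin_two u
  rw [hu] at hu2
  change (ℝ ∙ u)ᗮ.starProjection x = _
  rw [Submodule.starProjection_orthogonal_val, Submodule.starProjection_unit_singleton ℝ hu]
  refine PiLp.ext (Fin.forall_fin_two.2 ⟨?_, ?_⟩) <;>
    simp only [PiLp.sub_apply, PiLp.smul_apply, smul_eq_mul, EuclideanSpace.inner_fin_two,
      rot90_apply_zero, rot90_apply_one]
  · linear_combination x 0 * hu2
  · linear_combination x 1 * hu2

theorem image_proj_eq {u : ℝ²} (hu : ‖u‖ = 1) (S : Set ℝ²) :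
    proj u '' S = (· • rot90 u) '' (innerSL ℝ (rot90 u) '' S) := by
  rw [image_image]
  exact image_congr fun x _ => proj_eq_inner_rot90_smul hu x

theorem closedBall_hidesBehind_of_diam_le_width {B : Set ℝ²} {r : ℝ}
    (hB : ∀ w : ℝ², ‖w‖ = 1 → ∃ m M, innerSL ℝ w '' B = Icc m M ∧ 2 * r ≤ M - m) :
    HidesBehind (Metric.closedBall 0 r) B := by
  intro u hu
  have hw : ‖rot90 u‖ = 1 := (norm_rot90 u).trans hu
  obtain ⟨m, M, hB, hwidth⟩ := hB (rot90 u) hw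
  refine ⟨((m + M) / 2) • rot90 u,
    Submodule.smul_mem _ _ (rot90_mem_orthogonal_span_singleton u), ?_⟩
  rw [image_proj_eq hu, image_proj_eq hu, hB, image_innerSL_closedBall_zero hw]
  rintro _ ⟨_, ⟨t, ht, rfl⟩, rfl⟩
  exact ⟨(m + M) / 2 + t, ⟨by linarith [ht.1], by linarith [ht.2]⟩, add_smul _ _ _⟩

theorem exists_image_proj_eq_segment {u : ℝ²} (hu : ‖u‖ = 1) {S : Set ℝ²} {m M : ℝ}
    (hS : innerSL ℝ (rot90 u) '' S = Icc m M) (hmM : m ≤ M) :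
    ∃ a b, proj u '' S = segment ℝ a b ∧ ‖b - a‖ = M - m := by
  refine ⟨m • rot90 u, M • rot90 u, ?_, ?_⟩
  · rw [image_proj_eq hu, hS, ← segment_eq_Icc hmM]
    exact image_segment ℝ (LinearMap.toSpanSingleton ℝ ℝ² (rot90 u)).toAffineMap m M
  · rw [← sub_smul, norm_smul, norm_rot90, hu, mul_one, Real.norm_of_nonneg (sub_nonneg.2 hmM)]

theorem isCompact_Δ : IsCompact Δ := (toFinite _).isCompact_convexHull ℝ

theorem convex_Δ : Convex ℝ Δ := convex_convexHull ℝ _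

theorem exists_image_innerSL_Δ_eq_Icc {w : ℝ²} (hw : ‖w‖ = 1) :
    ∃ m M, innerSL ℝ w '' Δ = Icc m M ∧ Real.sqrt 3 / 2 ≤ M - m := by
  obtain ⟨m, M, hΔ⟩ := isCompact_Δ.exists_image_eq_Icc convex_Δ
    (convexHull_nonempty_iff.2 (insert_nonempty _ _)) (innerSL ℝ w)
  have hvert : ∀ v ∈ ({!₂[0, 0], !₂[1, 0], !₂[1/2, Real.sqrt 3 / 2]} : Set ℝ²),
      ⟪w, v⟫ ∈ Icc m M := fun v hv => hΔ ▸ mem_image_of_mem _ (subset_convexHull ℝ _ hv)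
  set a := ⟪w, !₂[1, 0]⟫
  set b := ⟪w, !₂[1/2, Real.sqrt 3 / 2]⟫
  obtain ⟨h₀m, h₀M⟩ : (0 : ℝ) ∈ Icc m M := by
    simpa [EuclideanSpace.inner_fin_two] using hvert !₂[0, 0] (by simp)
  obtain ⟨h₁m, h₁M⟩ : a ∈ Icc m M := hvert _ (by simp)
  obtain ⟨h₂m, h₂M⟩ : b ∈ Icc m M := hvert _ (by simp)
  -- the edge vectors of an equilateral triangle form a tight frame
  have hframe : a ^ 2 + (b - a) ^ 2 + (-b) ^ 2 = 3 / 2 * ‖w‖ ^ 2 := by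
    simp only [a, b, EuclideanSpace.inner_fin_two, EuclideanSpace.norm_sq_fin_two,
      Matrix.cons_val_zero, Matrix.cons_val_one, Matrix.cons_val_fin_one]
    linear_combination (w 1) ^ 2 / 2 * Real.sq_sqrt (show (0:ℝ) ≤ 3 by norm_num)
  have hwidth := sq_add_sq_add_sq_le_two_mul_sq (x := a) (y := b - a) (z := -b) (d := M - m)
    (by ring) (abs_le.2 ⟨by linarith, by linarith⟩) (abs_le.2 ⟨by linarith, by linarith⟩)
    (abs_le.2 ⟨by linarith, by linarith⟩)
  rw [hframe, hw] at hwidth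
  refine ⟨m, M, hΔ, ?_⟩
  nlinarith [Real.sq_sqrt (show (0:ℝ) ≤ 3 by norm_num), Real.sqrt_nonneg 3]

theorem Δ_eq_setOf : Δ = {x : ℝ² | x 1 ∈ Icc 0 (Real.sqrt 3 / 2) ∧
    x 0 ∈ Icc (x 1 / Real.sqrt 3) (1 - x 1 / Real.sqrt 3)} := by
  have hs : 0 < Real.sqrt 3 := by positivity
  refine Subset.antisymm (convexHull_min ?_ ?_) ?_
  · have hhalf : Real.sqrt 3 / 2 / Real.sqrt 3 = 1 / 2 := by field_simp
    rintro v (rfl | rfl | rfl) <;> norm_num [hhalf] <;> positivity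
  · rintro p ⟨⟨hp₁, hp₂⟩, hp₃, hp₄⟩ q ⟨⟨hq₁, hq₂⟩, hq₃, hq₄⟩ a b ha hb hab
    simp only [mem_ofPred_eq, mem_Icc, PiLp.add_apply, PiLp.smul_apply, smul_eq_mul]
    rw [add_div, mul_div_assoc, mul_div_assoc]
    refine ⟨⟨by positivity, ?_⟩, ?_, ?_⟩
    · nlinarith [mul_le_mul_of_nonneg_left hp₂ ha, mul_le_mul_of_nonneg_left hq₂ hb]
    · nlinarith [mul_le_mul_of_nonneg_left hp₃ ha, mul_le_mul_of_nonneg_left hq₃ hb]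
    · nlinarith [mul_le_mul_of_nonneg_left hp₄ ha, mul_le_mul_of_nonneg_left hq₄ hb]
  · rintro x ⟨⟨hx₁, -⟩, hx₂, hx₃⟩
    have hx := convex_Δ.sum_mem (t := Finset.univ)
      (w := ![1 - x 0 - x 1 / Real.sqrt 3, x 0 - x 1 / Real.sqrt 3, 2 * x 1 / Real.sqrt 3])
      (z := ![!₂[0, 0], !₂[1, 0], !₂[1/2, Real.sqrt 3 / 2]]) ?_ ?_ ?_
    · convert hx
      refine PiLp.ext (Fin.forall_fin_two.2 ⟨?_, ?_⟩) <;>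
        simp only [Fin.sum_univ_three, PiLp.add_apply, PiLp.smul_apply, smul_eq_mul,
          Matrix.cons_val_zero, Matrix.cons_val_one, Matrix.cons_val_two, Matrix.cons_val_fin_one,
          Matrix.tail_cons, Matrix.head_cons]
      · ring
      · field_simp
        ring
    · intro i _
      fin_cases i <;>
        simp only [Fin.zero_eta, Fin.mk_one, Fin.reduceFinMk, Matrix.cons_val_zero,
          Matrix.cons_val_one, Matrix.cons_val] <;>
        first | linarith | positivity
    · rw [Fin.sum_univ_three]
      simp only [Matrix.cons_val_zero, Matrix.cons_val_one, Matrix.cons_val_two, Matrix.tail_cons,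
        Matrix.head_cons]
      ring
    · intro i _
      fin_cases i <;> exact subset_convexHull ℝ _ (by simp)

theorem volume_prod_setOf_mem_Icc {β : Type*} [MeasurableSpace β] {ν : Measure β} [SFinite ν]
    {f g : β → ℝ} {s : Set β} (hf : Measurable f) (hg : Measurable g) (hs : MeasurableSet s) :
    (volume.prod ν) {p : ℝ × β | p.2 ∈ s ∧ p.1 ∈ Icc (f p.2) (g p.2)} =
      ∫⁻ y in s, ENNReal.ofReal (g y - f y) ∂ν := by
  have hmeas : MeasurableSet {p : ℝ × β | p.2 ∈ s ∧ p.1 ∈ Icc (f p.2) (g p.2)} :=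
    (measurable_snd hs).inter ((measurableSet_le (hf.comp measurable_snd) measurable_fst).inter
      (measurableSet_le measurable_fst (hg.comp measurable_snd)))
  rw [Measure.prod_apply_symm hmeas, ← lintegral_indicator hs]
  congr 1
  funext y
  by_cases hy : y ∈ s
  · rw [indicator_of_mem hy, ← Real.volume_Icc]
    congr 1
    ext x
    simp [hy]
  · simp [hy]

theorem volume_Δ : volume Δ = ENNReal.ofReal (Real.sqrt 3 / 4) := by
  have hΦ : MeasurePreserving ((MeasurableEquiv.toLp 2 (Fin 2 → ℝ)).symm.trans
      MeasurableEquiv.finTwoArrow) :=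
    (volume_preserving_finTwoArrow ℝ).comp
      (EuclideanSpace.volume_preserving_symm_measurableEquiv_toLp (Fin 2))
  have hs : 0 < Real.sqrt 3 := by positivity
  have hslice : ∀ y ∈ Icc 0 (Real.sqrt 3 / 2), 0 ≤ (1 - y / Real.sqrt 3) - y / Real.sqrt 3 := by
    intro y hy
    have : y / Real.sqrt 3 ≤ 1 / 2 := by rw [div_le_iff₀ hs]; linarith [hy.2]
    linarith
  calc volume Δ = volume {p : ℝ × ℝ | p.2 ∈ Icc 0 (Real.sqrt 3 / 2) ∧
        p.1 ∈ Icc (p.2 / Real.sqrt 3) (1 - p.2 / Real.sqrt 3)} := by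
        rw [← hΦ.measure_preimage_equiv, Δ_eq_setOf]
        rfl
    _ = ∫⁻ y in Icc 0 (Real.sqrt 3 / 2),
          ENNReal.ofReal ((1 - y / Real.sqrt 3) - y / Real.sqrt 3) := by
        rw [Measure.volume_eq_prod]
        exact volume_prod_setOf_mem_Icc (f := (· / Real.sqrt 3)) (g := (1 - · / Real.sqrt 3))
          (by fun_prop) (by fun_prop) measurableSet_Icc
    _ = ENNReal.ofReal (∫ y in Icc 0 (Real.sqrt 3 / 2), (1 - y / Real.sqrt 3) - y / Real.sqrt 3) :=
        (ofReal_integral_eq_lintegral_ofReal (Continuous.integrableOn_Icc (by fun_prop))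
          (ae_restrict_of_forall_mem measurableSet_Icc hslice)).symm
    _ = ENNReal.ofReal (Real.sqrt 3 / 4) := by
        rw [integral_Icc_eq_integral_Ioc, ← intervalIntegral.integral_of_le (by positivity),
          intervalIntegral.integral_eq_sub_of_hasDerivAt (f := fun y => y - y ^ 2 / Real.sqrt 3)
            (fun y _ => ?_) (Continuous.intervalIntegrable (by fun_prop) _ _)]
        · congr 1
          field_simp
          ring
        · exact ((hasDerivAt_id' y).sub ((hasDerivAt_pow 2 y).div_const _)).congr_deriv
            (by ring)

theorem disk_hides_behind_triangle_with_larger_area :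
    HidesBehind (Metric.closedBall (0 : EuclideanSpace ℝ (Fin 2)) (Real.sqrt 3 / 4)) Δ ∧
    (∀ u : EuclideanSpace ℝ (Fin 2), ‖u‖ = 1 →
      ∃ a b : EuclideanSpace ℝ (Fin 2),
        proj u '' Δ = segment ℝ a b ∧ Real.sqrt 3 / 2 ≤ ‖b - a‖) ∧
    volume (Metric.closedBall (0 : EuclideanSpace ℝ (Fin 2)) (Real.sqrt 3 / 4)) =
      ENNReal.ofReal (3 * Real.pi / 16) ∧
    volume Δ = ENNReal.ofReal (Real.sqrt 3 / 4) ∧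
    Real.sqrt 3 / 4 < 3 * Real.pi / 16 := by
  refine ⟨closedBall_hidesBehind_of_diam_le_width fun w hw => ?_, fun u hu => ?_, ?_, volume_Δ, ?_⟩
  · obtain ⟨m, M, hΔ, hwidth⟩ := exists_image_innerSL_Δ_eq_Icc hw
    exact ⟨m, M, hΔ, by linarith⟩
  · obtain ⟨m, M, hΔ, hwidth⟩ := exists_image_innerSL_Δ_eq_Icc ((norm_rot90 u).trans hu)
    obtain ⟨a, b, hab, hlen⟩ :=
      exists_image_proj_eq_segment hu hΔ (by linarith [Real.sqrt_nonneg 3])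
    exact ⟨a, b, hab, hlen ▸ hwidth⟩
  · rw [EuclideanSpace.volume_closedBall_fin_two, ← ENNReal.ofReal_pow (by positivity),
      ← ENNReal.ofReal_mul (by positivity), div_pow, Real.sq_sqrt (by norm_num)]
    ring_nf
  · have hsqrt3 : Real.sqrt 3 < 2 := (Real.sqrt_lt' two_pos).2 (by norm_num)
    linarith [Real.pi_gt_three]
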